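/- Suppose ‖e^{ωL}‖_∞ ≤ 1 for all ω > 0, and f satisfies |ξ + ω f(ξ)| ≤ ρ for all ξ ∈ [-ρ,ρ], ω ∈ (0, ω₀⁺]. If ‖uⁿ‖_∞ ≤ ρ and 0 < τ ≤ ω₀⁺, then the second-order IFRK scheme u⁽¹⁾ = e^{τL}(uⁿ + τ f(uⁿ)), u^{n+1} = (1/2)e^{τL}uⁿ + (1/2)(u⁽¹⁾ + τ f(u⁽¹⁾)) satisfies ‖u⁽¹⁾‖_∞ ≤ ρ and ‖u^{n+1}‖_∞ ≤ ρ. -/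

import Mathlib

open scoped BigOperators Kronecker

attribute [local instance] Matrix.linftyOpNormedRing Matrix.linftyOpNormedAlgebra

/-- The matrix `∞`-norm: maximum absolute row sum (the operator norm induced by the
vector supremum norm). -/
noncomputable def rowSumNorm {n : Type*} [Fintype n] (A : Matrix n n ℝ) : ℝ :=
  ⨆ i, ∑ j, |A i j|

/-- The logarithmic `∞`-norm `μ_∞(A) = max_i (a_ii + ∑_{j≠i} |a_ij|)`. -/
noncomputable def logNormInf {n : Type*} [Fintype n] [DecidableEq n] (A : Matrix n n ℝ) : ℝ :=
  ⨆ i, (A i i + ∑ j ∈ Finset.univ.erase i, |A i j|)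

/-!
Each stage of the scheme is built from two maps that preserve the sup-norm ball of radius `ρ`:
the componentwise forward Euler step `v ↦ v + τ f(v)` (by the hypothesis on `f`) and
`v ↦ e^{τL} v` (since `‖e^{τL} v‖_∞ ≤ ‖e^{τL}‖_∞ ‖v‖_∞`). The second stage is then a convex
combination of two points of the ball.
-/

theorem rowSumNorm_nonneg {n : Type*} [Fintype n] (A : Matrix n n ℝ) : 0 ≤ rowSumNorm A :=
  Real.iSup_nonneg fun _ => Finset.sum_nonneg fun _ _ => abs_nonneg _

theorem abs_mulVec_le_rowSumNorm_mul {n : Type*} [Fintype n] (A : Matrix n n ℝ) (v : n → ℝ)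
    (i : n) : |A.mulVec v i| ≤ rowSumNorm A * ‖v‖ :=
  calc |A.mulVec v i| ≤ ∑ j, |A i j| * ‖v‖ := by
        refine (Finset.abs_sum_le_sum_abs _ _).trans (Finset.sum_le_sum fun j _ => ?_)
        rw [abs_mul]
        exact mul_le_mul_of_nonneg_left (norm_le_pi_norm v j) (abs_nonneg _)
    _ = (∑ j, |A i j|) * ‖v‖ := (Finset.sum_mul ..).symm
    _ ≤ rowSumNorm A * ‖v‖ :=
        mul_le_mul_of_nonneg_right
          (le_ciSup (f := fun i => ∑ j, |A i j|) (Set.finite_range _).bddAbove i) (norm_nonneg v)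

theorem norm_mulVec_le_rowSumNorm_mul {n : Type*} [Fintype n] (A : Matrix n n ℝ) (v : n → ℝ) :
    ‖A.mulVec v‖ ≤ rowSumNorm A * ‖v‖ :=
  (pi_norm_le_iff_of_nonneg (mul_nonneg (rowSumNorm_nonneg A) (norm_nonneg v))).2
    (abs_mulVec_le_rowSumNorm_mul A v)

theorem norm_mulVec_le_of_rowSumNorm_le_one {n : Type*} [Fintype n] {A : Matrix n n ℝ}
    (hA : rowSumNorm A ≤ 1) {v : n → ℝ} {ρ : ℝ} (hv : ‖v‖ ≤ ρ) : ‖A.mulVec v‖ ≤ ρ :=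
  calc ‖A.mulVec v‖ ≤ rowSumNorm A * ‖v‖ := norm_mulVec_le_rowSumNorm_mul A v
    _ ≤ 1 * ρ := mul_le_mul hA hv (norm_nonneg v) zero_le_one
    _ = ρ := one_mul ρ

theorem norm_add_smul_comp_le {ι : Type*} [Fintype ι] {f : ℝ → ℝ} {τ ρ : ℝ}
    (hf : ∀ ξ : ℝ, |ξ| ≤ ρ → |ξ + τ * f ξ| ≤ ρ) {v : ι → ℝ} (hv : ‖v‖ ≤ ρ) :
    ‖v + τ • fun i => f (v i)‖ ≤ ρ :=
  (pi_norm_le_iff_of_nonneg ((norm_nonneg v).trans hv)).2 fun i =>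
    hf (v i) ((norm_le_pi_norm v i).trans hv)

theorem norm_midpoint_le {E : Type*} [SeminormedAddCommGroup E] [NormedSpace ℝ E] {x y : E}
    {ρ : ℝ} (hx : ‖x‖ ≤ ρ) (hy : ‖y‖ ≤ ρ) : ‖(1 / 2 : ℝ) • x + (1 / 2 : ℝ) • y‖ ≤ ρ := by
  simpa using (convex_closedBall (0 : E) ρ) (mem_closedBall_zero_iff.2 hx)
    (mem_closedBall_zero_iff.2 hy) (by norm_num : (0 : ℝ) ≤ 1 / 2) (by norm_num) (by norm_num)

theorem stmt_12_general {m : ℕ} (L : Matrix (Fin m) (Fin m) ℝ) (f : ℝ → ℝ)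
    (ρ ω₀ τ : ℝ)
    (hL : ∀ ω : ℝ, 0 < ω → rowSumNorm (NormedSpace.exp (ω • L)) ≤ 1)
    (hf : ∀ ξ : ℝ, |ξ| ≤ ρ → ∀ ω : ℝ, 0 < ω → ω ≤ ω₀ → |ξ + ω * f ξ| ≤ ρ)
    (u u1 u' : Fin m → ℝ) (hu : ‖u‖ ≤ ρ) (hτ0 : 0 < τ) (hτ : τ ≤ ω₀)
    (hu1 : u1 = (NormedSpace.exp (τ • L)).mulVec (u + τ • fun i => f (u i)))
    (hu' : u' = (1 / 2 : ℝ) • (NormedSpace.exp (τ • L)).mulVec u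
        + (1 / 2 : ℝ) • (u1 + τ • fun i => f (u1 i))) :
    ‖u1‖ ≤ ρ ∧ ‖u'‖ ≤ ρ := by
  have hexp := hL τ hτ0
  have heuler : ∀ ξ : ℝ, |ξ| ≤ ρ → |ξ + τ * f ξ| ≤ ρ := fun ξ hξ => hf ξ hξ τ hτ0 hτ
  have hu1_le : ‖u1‖ ≤ ρ :=
    hu1 ▸ norm_mulVec_le_of_rowSumNorm_le_one hexp (norm_add_smul_comp_le heuler hu)
  exact ⟨hu1_le, hu' ▸ norm_midpoint_le (norm_mulVec_le_of_rowSumNorm_le_one hexp hu)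
    (norm_add_smul_comp_le heuler hu1_le)⟩

theorem stmt_12 {m : ℕ} (L : Matrix (Fin m) (Fin m) ℝ) (f : ℝ → ℝ)
    (ρ ω₀ τ : ℝ) (hρ : 0 < ρ) (hω₀ : 0 < ω₀)
    (hL : ∀ ω : ℝ, 0 < ω → rowSumNorm (NormedSpace.exp (ω • L)) ≤ 1)
    (hf : ∀ ξ : ℝ, |ξ| ≤ ρ → ∀ ω : ℝ, 0 < ω → ω ≤ ω₀ → |ξ + ω * f ξ| ≤ ρ)
    (u u1 u' : Fin m → ℝ) (hu : ‖u‖ ≤ ρ) (hτ0 : 0 < τ) (hτ : τ ≤ ω₀)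
    (hu1 : u1 = (NormedSpace.exp (τ • L)).mulVec (u + τ • fun i => f (u i)))
    (hu' : u' = (1 / 2 : ℝ) • (NormedSpace.exp (τ • L)).mulVec u
        + (1 / 2 : ℝ) • (u1 + τ • fun i => f (u1 i))) :
    ‖u1‖ ≤ ρ ∧ ‖u'‖ ≤ ρ :=
  stmt_12_general L f ρ ω₀ τ hL hf u u1 u' hu hτ0 hτ hu1 hu'
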